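/- (Multi-skill covariance of residual changes.) In the multi-skill setting under Assumption 5 with parameter k, for all integers t, t' with t − t' ≥ k + 1, cov(w_t − w_{t−1}, w_{t'}) = Σ_{j=1}^{J} Σ_{j'=1}^{J} (μ_{j,t} − μ_{j,t−1}) · μ_{j',t'} · cov(θ_{j,t'}, θ_{j',t'}). -/

import Mathlib

open MeasureTheory ProbabilityTheory

/-- Covariance of two real-valued random variables under measure `P`. -/
noncomputable def cov {Ω : Type*} [MeasurableSpace Ω] (P : Measure Ω) (X Y : Ω → ℝ) : ℝ :=
  ∫ ω, (X ω - ∫ a, X a ∂P) * (Y ω - ∫ a, Y a ∂P) ∂P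

/-- Variance of a real-valued random variable under measure `P`. -/
noncomputable def Var {Ω : Type*} [MeasurableSpace Ω] (P : Measure Ω) (X : Ω → ℝ) : ℝ :=
  cov P X X

/-!
By Assumption 5(i) the skill increments `θ_{j,s} - θ_{j,s-1}`, `s > t'`, are uncorrelated with
`θ_{j',t'}`, so telescoping gives `cov(θ_{j,s}, θ_{j',t'}) = cov(θ_{j,t'}, θ_{j',t'})` for all
`s ≥ t'`. Shocks are uncorrelated with skills and, at lags `≥ k`, with each other; hence for
`s - t' ≥ k`, `cov(w_s, w_{t'}) = Σⱼ Σⱼ' μ_{j,s} μ_{j',t'} cov(θ_{j,t'}, θ_{j',t'})`, and the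
theorem is the difference of this identity at `s = t` and `s = t - 1`.
-/

section Covariance

variable {Ω : Type*} [MeasurableSpace Ω] {P : Measure Ω} [IsFiniteMeasure P]

omit [IsFiniteMeasure P] in
lemma cov_eq_covariance (X Y : Ω → ℝ) : cov P X Y = cov[X, Y; P] := rfl

lemma cov_eq_of_cov_increment_eq_zero {X : ℤ → Ω → ℝ} {Y : Ω → ℝ}
    (hX : ∀ s, MemLp (X s) 2 P) (hY : MemLp Y 2 P) {t₀ : ℤ}
    (hinc : ∀ s, t₀ < s → cov P (fun ω => X s ω - X (s - 1) ω) Y = 0)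
    {s : ℤ} (hs : t₀ ≤ s) : cov P (X s) Y = cov P (X t₀) Y := by
  induction s, hs using Int.leInduction with
  | base => rfl
  | succ n hn ih =>
    have h := hinc (n + 1) (by omega)
    rw [cov_eq_covariance, covariance_fun_sub_left (hX _) (hX _) hY, add_sub_cancel_right]
      at h
    rw [← ih]
    exact sub_eq_zero.mp h

lemma cov_sum_smul_add_sum_smul_add {ι ι' : Type*} [Fintype ι] [Fintype ι']
    {X : ι → Ω → ℝ} {Y : ι' → Ω → ℝ} {E F : Ω → ℝ} (a : ι → ℝ) (b : ι' → ℝ)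
    (hX : ∀ i, MemLp (X i) 2 P) (hY : ∀ j, MemLp (Y j) 2 P)
    (hE : MemLp E 2 P) (hF : MemLp F 2 P)
    (hXF : ∀ i, cov P (X i) F = 0) (hEY : ∀ j, cov P E (Y j) = 0) (hEF : cov P E F = 0) :
    cov P (∑ i, a i • X i + E) (∑ j, b j • Y j + F) =
      ∑ i, ∑ j, a i * b j * cov P (X i) (Y j) := by
  have haX : ∀ i, MemLp (a i • X i) 2 P := fun i => (hX i).const_smul _
  have hbY : ∀ j, MemLp (b j • Y j) 2 P := fun j => (hY j).const_smul _
  have hsX := memLp_finsetSum' Finset.univ fun i _ => haX i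
  have hsY := memLp_finsetSum' Finset.univ fun j _ => hbY j
  simp only [cov_eq_covariance] at *
  rw [covariance_add_left hsX hE (hsY.add hF), covariance_add_right hsX hsY hF,
    covariance_add_right hE hsY hF, covariance_sum_sum haX hbY,
    covariance_sum_left haX hF, covariance_sum_right hbY hE]
  simp [covariance_smul_left, covariance_smul_right, hXF, hEY, hEF, mul_left_comm, mul_assoc]

end Covariance

theorem multi_skill_cov_of_changes_general
    {Ω : Type*} [MeasurableSpace Ω] (P : Measure Ω) [IsProbabilityMeasure P]
    (J : ℕ)
    (θ : Fin J → ℤ → Ω → ℝ) (μ : Fin J → ℤ → ℝ) (ε : ℤ → Ω → ℝ) (w : ℤ → Ω → ℝ)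
    (hθ : ∀ j t, MemLp (θ j t) 2 P) (hε : ∀ t, MemLp (ε t) 2 P)
    (hw : ∀ t ω, w t ω = (∑ j : Fin J, μ j t * θ j t ω) + ε t ω)
    (k : ℕ)
    (A5i : ∀ (j j' : Fin J) (t t' : ℤ), 1 ≤ t - t' →
      cov P (fun ω => θ j t ω - θ j (t - 1) ω) (θ j' t') = 0)
    (A5ii : ∀ (j : Fin J) (t t' : ℤ), cov P (θ j t) (ε t') = 0)
    (A5iii : ∀ t t' : ℤ, (k : ℤ) ≤ |t - t'| → cov P (ε t) (ε t') = 0) :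
    ∀ t t' : ℤ, (k : ℤ) + 1 ≤ t - t' →
      cov P (fun ω => w t ω - w (t - 1) ω) (w t') =
        ∑ j : Fin J, ∑ j' : Fin J,
          (μ j t - μ j (t - 1)) * μ j' t' * cov P (θ j t') (θ j' t') := by
  intro t t' htt'
  have hw_eq : ∀ s, w s = ∑ j, μ j s • θ j s + ε s := fun s => funext fun ω => by simp [hw]
  have hw_memLp : ∀ s, MemLp (w s) 2 P := fun s => by
    rw [hw_eq]
    exact (memLp_finsetSum' _ fun j _ => (hθ j s).const_smul _).add (hε s)
  have hcov_level : ∀ s, (k : ℤ) ≤ s - t' → cov P (w s) (w t') =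
      ∑ j, ∑ j', μ j s * μ j' t' * cov P (θ j t') (θ j' t') := by
    intro s hs
    rw [hw_eq s, hw_eq t', cov_sum_smul_add_sum_smul_add _ _ (hθ · s) (hθ · t') (hε s) (hε t')
      (A5ii · s t') (fun j' => (covariance_comm ..).trans (A5ii j' t' s))
      (A5iii s t' (by rwa [abs_of_nonneg (by omega)]))]
    refine Finset.sum_congr rfl fun j _ => Finset.sum_congr rfl fun j' _ => ?_
    rw [cov_eq_of_cov_increment_eq_zero (hθ j) (hθ j' t')
      (fun u hu => A5i j j' u t' (by omega)) (by omega : t' ≤ s)]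
  have hsplit : cov P (fun ω => w t ω - w (t - 1) ω) (w t') =
      cov P (w t) (w t') - cov P (w (t - 1)) (w t') :=
    covariance_fun_sub_left (hw_memLp t) (hw_memLp (t - 1)) (hw_memLp t')
  rw [hsplit, hcov_level t (by omega), hcov_level (t - 1) (by omega), ← Finset.sum_sub_distrib]
  refine Finset.sum_congr rfl fun j _ => ?_
  rw [← Finset.sum_sub_distrib]
  exact Finset.sum_congr rfl fun j' _ => by ring

/-- Multi-skill covariance of residual changes: under Assumption 5, for `t - t' ≥ k + 1`,
`cov (w t − w (t−1)) (w t') = Σⱼ Σⱼ' (μ j t − μ j (t−1)) * μ j' t' * cov (θ j t') (θ j' t')`. -/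
theorem multi_skill_cov_of_changes
    {Ω : Type*} [MeasurableSpace Ω] (P : Measure Ω) [IsProbabilityMeasure P]
    (J : ℕ) (hJ : 1 ≤ J)
    (θ : Fin J → ℤ → Ω → ℝ) (μ : Fin J → ℤ → ℝ) (ε : ℤ → Ω → ℝ) (w : ℤ → Ω → ℝ)
    (hθ : ∀ j t, MemLp (θ j t) 2 P) (hε : ∀ t, MemLp (ε t) 2 P)
    (hw : ∀ t ω, w t ω = (∑ j : Fin J, μ j t * θ j t ω) + ε t ω)
    (k : ℕ) (hk : 1 ≤ k)
    (A5i : ∀ (j j' : Fin J) (t t' : ℤ), 1 ≤ t - t' →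
      cov P (fun ω => θ j t ω - θ j (t - 1) ω) (θ j' t') = 0)
    (A5ii : ∀ (j : Fin J) (t t' : ℤ), cov P (θ j t) (ε t') = 0)
    (A5iii : ∀ t t' : ℤ, (k : ℤ) ≤ |t - t'| → cov P (ε t) (ε t') = 0) :
    ∀ t t' : ℤ, (k : ℤ) + 1 ≤ t - t' →
      cov P (fun ω => w t ω - w (t - 1) ω) (w t') =
        ∑ j : Fin J, ∑ j' : Fin J,
          (μ j t - μ j (t - 1)) * μ j' t' * cov P (θ j t') (θ j' t') :=
  multi_skill_cov_of_changes_general P J θ μ ε w hθ hε hw k A5i A5ii A5iii
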